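/- For every X ∈ ℝ⁸, the element Ω·(Φ(X) ⊗ 1) of 𝕆 ⊗ Cl₈ decomposes along the octonion basis with the twistor vectors as Clifford coefficients: Ω·(Φ(X) ⊗ 1) = Σ_{i=0}^{7} e_i ⊗ ι(X_i), where X_i := Φ⁻¹(Φ(X)·conj(e_i)). -/

import Mathlib

noncomputable section

open scoped Quaternion TensorProduct

/-- The octonions, realized as the Cayley–Dickson double of the quaternions. -/
def Oct : Type := ℍ × ℍ

namespace Oct

instance : AddCommGroup Oct := inferInstanceAs (AddCommGroup (ℍ × ℍ))
instance : Module ℝ Oct := inferInstanceAs (Module ℝ (ℍ × ℍ))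

/-- First (quaternionic) component. -/
def x (p : Oct) : ℍ := Prod.fst p
/-- Second (quaternionic) component. -/
def y (p : Oct) : ℍ := Prod.snd p
/-- Build an octonion from two quaternions. -/
def mk (a b : ℍ) : Oct := ((a, b) : ℍ × ℍ)

@[simp] lemma x_mk (a b : ℍ) : (mk a b).x = a := rfl
@[simp] lemma y_mk (a b : ℍ) : (mk a b).y = b := rfl
@[simp] lemma x_add (p q : Oct) : (p + q).x = p.x + q.x := rfl
@[simp] lemma y_add (p q : Oct) : (p + q).y = p.y + q.y := rfl
@[simp] lemma x_smul (r : ℝ) (p : Oct) : (r • p).x = r • p.x := rfl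
@[simp] lemma y_smul (r : ℝ) (p : Oct) : (r • p).y = r • p.y := rfl
@[simp] lemma x_zero : (0 : Oct).x = 0 := rfl
@[simp] lemma y_zero : (0 : Oct).y = 0 := rfl

@[ext] lemma ext {p q : Oct} (h1 : p.x = q.x) (h2 : p.y = q.y) : p = q :=
  Prod.ext h1 h2

/-- Cayley–Dickson multiplication: `(a,b)·(c,d) = (a·c − conj(d)·b, d·a + b·conj(c))`. -/
instance : Mul Oct :=
  ⟨fun p q => mk (p.x * q.x - star q.y * p.y) (q.y * p.x + p.y * star q.x)⟩

instance : One Oct := ⟨mk 1 0⟩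

@[simp] lemma x_mul (p q : Oct) : (p * q).x = p.x * q.x - star q.y * p.y := rfl
@[simp] lemma y_mul (p q : Oct) : (p * q).y = q.y * p.x + p.y * star q.x := rfl
@[simp] lemma x_one : (1 : Oct).x = 1 := rfl
@[simp] lemma y_one : (1 : Oct).y = 0 := rfl

instance : NonUnitalNonAssocRing Oct :=
  { (inferInstance : AddCommGroup Oct) with
    mul := (· * ·)
    left_distrib := by
      intro p q r
      refine ext ?_ ?_ <;>
        simp only [x_mul, y_mul, x_add, y_add, star_add] <;> noncomm_ring
    right_distrib := by
      intro p q r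
      refine ext ?_ ?_ <;>
        simp only [x_mul, y_mul, x_add, y_add, star_add] <;> noncomm_ring
    zero_mul := by
      intro p
      refine ext ?_ ?_ <;> simp only [x_mul, y_mul, x_zero, y_zero, star_zero] <;> simp
    mul_zero := by
      intro p
      refine ext ?_ ?_ <;> simp only [x_mul, y_mul, x_zero, y_zero, star_zero] <;> simp }

instance : SMulCommClass ℝ Oct Oct where
  smul_comm r p q := by
    show r • (p * q) = p * (r • q)
    refine ext ?_ ?_ <;>
      simp [x_mul, y_mul, smul_sub, smul_add, mul_smul_comm, smul_mul_assoc,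
        star_smul, star_trivial]

instance : IsScalarTower ℝ Oct Oct where
  smul_assoc r p q := by
    show (r • p) * q = r • (p * q)
    refine ext ?_ ?_ <;>
      simp [x_mul, y_mul, smul_sub, smul_add, mul_smul_comm, smul_mul_assoc,
        star_smul, star_trivial]

/-- Octonionic conjugation: `conj (a,b) = (conj a, −b)`. -/
def conj (p : Oct) : Oct := mk (star p.x) (-p.y)

/-- The real part of an octonion. -/
def re (p : Oct) : ℝ := p.x.re

/-- The standard basis `e_0, …, e_7` of the octonions. -/
def e : Fin 8 → Oct :=
  ![mk 1 0, mk ⟨0, 1, 0, 0⟩ 0, mk ⟨0, 0, 1, 0⟩ 0, mk ⟨0, 0, 0, 1⟩ 0,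
    mk 0 1, mk 0 ⟨0, 1, 0, 0⟩, mk 0 ⟨0, 0, 1, 0⟩, mk 0 ⟨0, 0, 0, 1⟩]

/-- The real coordinates of an octonion with respect to the standard basis. -/
def coord : Fin 8 → Oct → ℝ :=
  ![fun p => p.x.re, fun p => p.x.imI, fun p => p.x.imJ, fun p => p.x.imK,
    fun p => p.y.re, fun p => p.y.imI, fun p => p.y.imJ, fun p => p.y.imK]

lemma coord_add (j : Fin 8) (p q : Oct) :
    coord j (p + q) = coord j p + coord j q := by fin_cases j <;> rfl

lemma coord_smul (j : Fin 8) (r : ℝ) (p : Oct) :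
    coord j (r • p) = r * coord j p := by fin_cases j <;> rfl

/-- The binary "dot product" `⟨i,j⟩ = i₁j₁ + i₂j₂ + i₃j₃` of binary digits. -/
def bdot (i j : Fin 8) : ℕ :=
  ((i.val.testBit 0 && j.val.testBit 0).toNat +
   (i.val.testBit 1 && j.val.testBit 1).toNat +
   (i.val.testBit 2 && j.val.testBit 2).toNat) % 2

/-- The involution `J_i`, the ℝ-linear map determined by `J_i(e_j) = (−1)^{⟨i,j⟩} e_j`. -/
def J (i : Fin 8) : Oct →ₗ[ℝ] Oct where
  toFun p := ∑ j : Fin 8, ((-1 : ℝ) ^ bdot i j * coord j p) • e j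
  map_add' p q := by
    simp only [coord_add, mul_add, add_smul]
    rw [Finset.sum_add_distrib]
  map_smul' r p := by
    simp only [coord_smul, RingHom.id_apply, Finset.smul_sum, smul_smul, mul_left_comm]

/-- The sign `σ(j,i)` defined by `J_j(conj e_i) = (−1)^{σ(j,i)} e_i`. -/
def sigma (j i : Fin 8) : ℕ := if i = 0 then 0 else (bdot j i + 1) % 2

end Oct
namespace Oct

@[simp] lemma e_0 : e 0 = mk 1 0 := rfl
@[simp] lemma e_1 : e 1 = mk ⟨0, 1, 0, 0⟩ 0 := rfl
@[simp] lemma e_2 : e 2 = mk ⟨0, 0, 1, 0⟩ 0 := rfl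
@[simp] lemma e_3 : e 3 = mk ⟨0, 0, 0, 1⟩ 0 := rfl
@[simp] lemma e_4 : e 4 = mk 0 1 := rfl
@[simp] lemma e_5 : e 5 = mk 0 ⟨0, 1, 0, 0⟩ := rfl
@[simp] lemma e_6 : e 6 = mk 0 ⟨0, 0, 1, 0⟩ := rfl
@[simp] lemma e_7 : e 7 = mk 0 ⟨0, 0, 0, 1⟩ := rfl

@[simp] lemma coord_0 (p : Oct) : coord 0 p = p.x.re := rfl
@[simp] lemma coord_1 (p : Oct) : coord 1 p = p.x.imI := rfl
@[simp] lemma coord_2 (p : Oct) : coord 2 p = p.x.imJ := rfl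
@[simp] lemma coord_3 (p : Oct) : coord 3 p = p.x.imK := rfl
@[simp] lemma coord_4 (p : Oct) : coord 4 p = p.y.re := rfl
@[simp] lemma coord_5 (p : Oct) : coord 5 p = p.y.imI := rfl
@[simp] lemma coord_6 (p : Oct) : coord 6 p = p.y.imJ := rfl
@[simp] lemma coord_7 (p : Oct) : coord 7 p = p.y.imK := rfl

lemma coord_e (l m : Fin 8) : coord l (e m) = if l = m then 1 else 0 := by
  fin_cases l <;> fin_cases m <;> rfl

lemma sum_coord_smul_e (p : Oct) : ∑ l : Fin 8, coord l p • e l = p := by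
  have h : ∀ m, coord m (∑ l : Fin 8, coord l p • e l) = coord m p := by
    intro m
    fin_cases m <;> simp only [Fin.sum_univ_eight, coord_add, coord_smul, coord_e] <;> simp
  refine ext ?_ ?_ <;> ext
  exacts [h 0, h 1, h 2, h 3, h 4, h 5, h 6, h 7]

end Oct

/-- The ℝ-linear isomorphism `Φ : ℝ⁸ → 𝕆` with `Φ(b_l) = e_l`. -/
def Phi : EuclideanSpace ℝ (Fin 8) ≃ₗ[ℝ] Oct where
  toFun v := ∑ l : Fin 8, v l • Oct.e l
  map_add' u v := by
    simp only [PiLp.add_apply, add_smul]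
    rw [Finset.sum_add_distrib]
  map_smul' r v := by
    simp only [PiLp.smul_apply, smul_eq_mul, RingHom.id_apply, Finset.smul_sum, smul_smul]
  invFun p := (WithLp.toLp 2 (fun l => Oct.coord l p) : EuclideanSpace ℝ (Fin 8))
  left_inv v := by
    ext l
    show Oct.coord l (∑ k : Fin 8, v k • Oct.e k) = v l
    fin_cases l <;>
      simp only [Fin.sum_univ_eight, Oct.coord_add, Oct.coord_smul, Oct.coord_e] <;> simp
  right_inv p := Oct.sum_coord_smul_e p

/-- The quadratic form `Q(v) = −‖v‖²` on ℝ⁸. -/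
def Q8 : QuadraticForm ℝ (EuclideanSpace ℝ (Fin 8)) :=
  - LinearMap.BilinMap.toQuadraticMap
      (innerₗ (EuclideanSpace ℝ (Fin 8)) : LinearMap.BilinForm ℝ (EuclideanSpace ℝ (Fin 8)))

/-- The Clifford algebra `Cl₈` of `Q(v) = −‖v‖²` on ℝ⁸. -/
abbrev Cl8 := CliffordAlgebra Q8

/-- The Clifford generators `g_l := ι(b_l)`. -/
def g (l : Fin 8) : Cl8 := CliffordAlgebra.ι Q8 (EuclideanSpace.single l 1)

/-- The extension `J_j ⊗ id` of `J_j` to `𝕆 ⊗ Cl₈`. -/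
def JT (j : Fin 8) : Oct ⊗[ℝ] Cl8 →ₗ[ℝ] Oct ⊗[ℝ] Cl8 :=
  TensorProduct.map (Oct.J j) LinearMap.id

/-- The element `Ω := Σᵢ conj(eᵢ) ⊗ gᵢ` of `𝕆 ⊗ Cl₈`. -/
def Omega : Oct ⊗[ℝ] Cl8 := ∑ i : Fin 8, (Oct.e i).conj ⊗ₜ[ℝ] g i

/-- The octonionic Witt basis `f_j := (J_j ⊗ id)(Ω)`. -/
def f (j : Fin 8) : Oct ⊗[ℝ] Cl8 := JT j Omega

/-- The twistor vectors `X_i := Φ⁻¹(Φ(X)·conj(e_i))`. -/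
def Xtw (X : EuclideanSpace ℝ (Fin 8)) (i : Fin 8) : EuclideanSpace ℝ (Fin 8) :=
  Phi.symm (Phi X * (Oct.e i).conj)

/-- The Hermitian variables `Z_j := (J_j ⊗ id)(Ω·(Φ(X) ⊗ 1))`. -/
def Z (X : EuclideanSpace ℝ (Fin 8)) (j : Fin 8) : Oct ⊗[ℝ] Cl8 :=
  JT j (Omega * (Phi X ⊗ₜ[ℝ] (1 : Cl8)))



@[simp] lemma Oct.x_neg (p : Oct) : (-p).x = -p.x := rfl
@[simp] lemma Oct.y_neg (p : Oct) : (-p).y = -p.y := rfl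

set_option maxHeartbeats 1000000 in
lemma oct_key0 (p : Oct) :
    (Oct.e 0).conj * p = ∑ l : Fin 8, Oct.coord 0 (p * (Oct.e l).conj) • Oct.e l := by
  simp only [Fin.sum_univ_eight, Oct.e_0, Oct.e_1, Oct.e_2, Oct.e_3, Oct.e_4, Oct.e_5,
      Oct.e_6, Oct.e_7, Oct.conj, Oct.x_mk, Oct.y_mk, Oct.coord_0, Oct.coord_1, Oct.coord_2,
      Oct.coord_3, Oct.coord_4, Oct.coord_5, Oct.coord_6, Oct.coord_7]
  refine Oct.ext ?_ ?_ <;>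
  · ext <;>
    · simp only [Oct.x_mul, Oct.y_mul, Oct.x_add, Oct.y_add, Oct.x_smul, Oct.y_smul,
          Oct.x_neg, Oct.y_neg, Oct.x_mk, Oct.y_mk,
          Quaternion.re_add, Quaternion.imI_add, Quaternion.imJ_add,
          Quaternion.imK_add, Quaternion.re_sub, Quaternion.imI_sub,
          Quaternion.imJ_sub, Quaternion.imK_sub, Quaternion.re_neg,
          Quaternion.imI_neg, Quaternion.imJ_neg, Quaternion.imK_neg,
          Quaternion.re_smul, Quaternion.imI_smul, Quaternion.imJ_smul,
          Quaternion.imK_smul, Quaternion.re_mul, Quaternion.imI_mul,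
          Quaternion.imJ_mul, Quaternion.imK_mul, Quaternion.re_star,
          Quaternion.imI_star, Quaternion.imJ_star, Quaternion.imK_star,
          Quaternion.re_one, Quaternion.imI_one, Quaternion.imJ_one,
          Quaternion.imK_one, Quaternion.re_zero, Quaternion.imI_zero,
          Quaternion.imJ_zero, Quaternion.imK_zero, smul_eq_mul,
          neg_zero, neg_neg, star_zero, star_one, star_neg]
      simp only [Oct.x, Oct.y, Oct.mk, QuaternionAlgebra.re_zero, QuaternionAlgebra.imI_zero,
        QuaternionAlgebra.imJ_zero, QuaternionAlgebra.imK_zero, Quaternion.re_zero,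
        Quaternion.imI_zero, Quaternion.imJ_zero, Quaternion.imK_zero]
      try ring_nf

set_option maxHeartbeats 1000000 in
lemma oct_key1 (p : Oct) :
    (Oct.e 1).conj * p = ∑ l : Fin 8, Oct.coord 1 (p * (Oct.e l).conj) • Oct.e l := by
  simp only [Fin.sum_univ_eight, Oct.e_0, Oct.e_1, Oct.e_2, Oct.e_3, Oct.e_4, Oct.e_5,
      Oct.e_6, Oct.e_7, Oct.conj, Oct.x_mk, Oct.y_mk, Oct.coord_0, Oct.coord_1, Oct.coord_2,
      Oct.coord_3, Oct.coord_4, Oct.coord_5, Oct.coord_6, Oct.coord_7]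
  refine Oct.ext ?_ ?_ <;>
  · ext <;>
    · simp only [Oct.x_mul, Oct.y_mul, Oct.x_add, Oct.y_add, Oct.x_smul, Oct.y_smul,
          Oct.x_neg, Oct.y_neg, Oct.x_mk, Oct.y_mk,
          Quaternion.re_add, Quaternion.imI_add, Quaternion.imJ_add,
          Quaternion.imK_add, Quaternion.re_sub, Quaternion.imI_sub,
          Quaternion.imJ_sub, Quaternion.imK_sub, Quaternion.re_neg,
          Quaternion.imI_neg, Quaternion.imJ_neg, Quaternion.imK_neg,
          Quaternion.re_smul, Quaternion.imI_smul, Quaternion.imJ_smul,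
          Quaternion.imK_smul, Quaternion.re_mul, Quaternion.imI_mul,
          Quaternion.imJ_mul, Quaternion.imK_mul, Quaternion.re_star,
          Quaternion.imI_star, Quaternion.imJ_star, Quaternion.imK_star,
          Quaternion.re_one, Quaternion.imI_one, Quaternion.imJ_one,
          Quaternion.imK_one, Quaternion.re_zero, Quaternion.imI_zero,
          Quaternion.imJ_zero, Quaternion.imK_zero, smul_eq_mul,
          neg_zero, neg_neg, star_zero, star_one, star_neg]
      simp only [Oct.x, Oct.y, Oct.mk, QuaternionAlgebra.re_zero, QuaternionAlgebra.imI_zero,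
        QuaternionAlgebra.imJ_zero, QuaternionAlgebra.imK_zero, Quaternion.re_zero,
        Quaternion.imI_zero, Quaternion.imJ_zero, Quaternion.imK_zero]
      try ring_nf

set_option maxHeartbeats 1000000 in
lemma oct_key2 (p : Oct) :
    (Oct.e 2).conj * p = ∑ l : Fin 8, Oct.coord 2 (p * (Oct.e l).conj) • Oct.e l := by
  simp only [Fin.sum_univ_eight, Oct.e_0, Oct.e_1, Oct.e_2, Oct.e_3, Oct.e_4, Oct.e_5,
      Oct.e_6, Oct.e_7, Oct.conj, Oct.x_mk, Oct.y_mk, Oct.coord_0, Oct.coord_1, Oct.coord_2,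
      Oct.coord_3, Oct.coord_4, Oct.coord_5, Oct.coord_6, Oct.coord_7]
  refine Oct.ext ?_ ?_ <;>
  · ext <;>
    · simp only [Oct.x_mul, Oct.y_mul, Oct.x_add, Oct.y_add, Oct.x_smul, Oct.y_smul,
          Oct.x_neg, Oct.y_neg, Oct.x_mk, Oct.y_mk,
          Quaternion.re_add, Quaternion.imI_add, Quaternion.imJ_add,
          Quaternion.imK_add, Quaternion.re_sub, Quaternion.imI_sub,
          Quaternion.imJ_sub, Quaternion.imK_sub, Quaternion.re_neg,
          Quaternion.imI_neg, Quaternion.imJ_neg, Quaternion.imK_neg,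
          Quaternion.re_smul, Quaternion.imI_smul, Quaternion.imJ_smul,
          Quaternion.imK_smul, Quaternion.re_mul, Quaternion.imI_mul,
          Quaternion.imJ_mul, Quaternion.imK_mul, Quaternion.re_star,
          Quaternion.imI_star, Quaternion.imJ_star, Quaternion.imK_star,
          Quaternion.re_one, Quaternion.imI_one, Quaternion.imJ_one,
          Quaternion.imK_one, Quaternion.re_zero, Quaternion.imI_zero,
          Quaternion.imJ_zero, Quaternion.imK_zero, smul_eq_mul,
          neg_zero, neg_neg, star_zero, star_one, star_neg]
      simp only [Oct.x, Oct.y, Oct.mk, QuaternionAlgebra.re_zero, QuaternionAlgebra.imI_zero,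
        QuaternionAlgebra.imJ_zero, QuaternionAlgebra.imK_zero, Quaternion.re_zero,
        Quaternion.imI_zero, Quaternion.imJ_zero, Quaternion.imK_zero]
      try ring_nf

set_option maxHeartbeats 1000000 in
lemma oct_key3 (p : Oct) :
    (Oct.e 3).conj * p = ∑ l : Fin 8, Oct.coord 3 (p * (Oct.e l).conj) • Oct.e l := by
  simp only [Fin.sum_univ_eight, Oct.e_0, Oct.e_1, Oct.e_2, Oct.e_3, Oct.e_4, Oct.e_5,
      Oct.e_6, Oct.e_7, Oct.conj, Oct.x_mk, Oct.y_mk, Oct.coord_0, Oct.coord_1, Oct.coord_2,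
      Oct.coord_3, Oct.coord_4, Oct.coord_5, Oct.coord_6, Oct.coord_7]
  refine Oct.ext ?_ ?_ <;>
  · ext <;>
    · simp only [Oct.x_mul, Oct.y_mul, Oct.x_add, Oct.y_add, Oct.x_smul, Oct.y_smul,
          Oct.x_neg, Oct.y_neg, Oct.x_mk, Oct.y_mk,
          Quaternion.re_add, Quaternion.imI_add, Quaternion.imJ_add,
          Quaternion.imK_add, Quaternion.re_sub, Quaternion.imI_sub,
          Quaternion.imJ_sub, Quaternion.imK_sub, Quaternion.re_neg,
          Quaternion.imI_neg, Quaternion.imJ_neg, Quaternion.imK_neg,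
          Quaternion.re_smul, Quaternion.imI_smul, Quaternion.imJ_smul,
          Quaternion.imK_smul, Quaternion.re_mul, Quaternion.imI_mul,
          Quaternion.imJ_mul, Quaternion.imK_mul, Quaternion.re_star,
          Quaternion.imI_star, Quaternion.imJ_star, Quaternion.imK_star,
          Quaternion.re_one, Quaternion.imI_one, Quaternion.imJ_one,
          Quaternion.imK_one, Quaternion.re_zero, Quaternion.imI_zero,
          Quaternion.imJ_zero, Quaternion.imK_zero, smul_eq_mul,
          neg_zero, neg_neg, star_zero, star_one, star_neg]
      simp only [Oct.x, Oct.y, Oct.mk, QuaternionAlgebra.re_zero, QuaternionAlgebra.imI_zero,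
        QuaternionAlgebra.imJ_zero, QuaternionAlgebra.imK_zero, Quaternion.re_zero,
        Quaternion.imI_zero, Quaternion.imJ_zero, Quaternion.imK_zero]
      try ring_nf

set_option maxHeartbeats 1000000 in
lemma oct_key4 (p : Oct) :
    (Oct.e 4).conj * p = ∑ l : Fin 8, Oct.coord 4 (p * (Oct.e l).conj) • Oct.e l := by
  simp only [Fin.sum_univ_eight, Oct.e_0, Oct.e_1, Oct.e_2, Oct.e_3, Oct.e_4, Oct.e_5,
      Oct.e_6, Oct.e_7, Oct.conj, Oct.x_mk, Oct.y_mk, Oct.coord_0, Oct.coord_1, Oct.coord_2,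
      Oct.coord_3, Oct.coord_4, Oct.coord_5, Oct.coord_6, Oct.coord_7]
  refine Oct.ext ?_ ?_ <;>
  · ext <;>
    · simp only [Oct.x_mul, Oct.y_mul, Oct.x_add, Oct.y_add, Oct.x_smul, Oct.y_smul,
          Oct.x_neg, Oct.y_neg, Oct.x_mk, Oct.y_mk,
          Quaternion.re_add, Quaternion.imI_add, Quaternion.imJ_add,
          Quaternion.imK_add, Quaternion.re_sub, Quaternion.imI_sub,
          Quaternion.imJ_sub, Quaternion.imK_sub, Quaternion.re_neg,
          Quaternion.imI_neg, Quaternion.imJ_neg, Quaternion.imK_neg,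
          Quaternion.re_smul, Quaternion.imI_smul, Quaternion.imJ_smul,
          Quaternion.imK_smul, Quaternion.re_mul, Quaternion.imI_mul,
          Quaternion.imJ_mul, Quaternion.imK_mul, Quaternion.re_star,
          Quaternion.imI_star, Quaternion.imJ_star, Quaternion.imK_star,
          Quaternion.re_one, Quaternion.imI_one, Quaternion.imJ_one,
          Quaternion.imK_one, Quaternion.re_zero, Quaternion.imI_zero,
          Quaternion.imJ_zero, Quaternion.imK_zero, smul_eq_mul,
          neg_zero, neg_neg, star_zero, star_one, star_neg]
      simp only [Oct.x, Oct.y, Oct.mk, QuaternionAlgebra.re_zero, QuaternionAlgebra.imI_zero,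
        QuaternionAlgebra.imJ_zero, QuaternionAlgebra.imK_zero, Quaternion.re_zero,
        Quaternion.imI_zero, Quaternion.imJ_zero, Quaternion.imK_zero]
      try ring_nf

set_option maxHeartbeats 1000000 in
lemma oct_key5 (p : Oct) :
    (Oct.e 5).conj * p = ∑ l : Fin 8, Oct.coord 5 (p * (Oct.e l).conj) • Oct.e l := by
  simp only [Fin.sum_univ_eight, Oct.e_0, Oct.e_1, Oct.e_2, Oct.e_3, Oct.e_4, Oct.e_5,
      Oct.e_6, Oct.e_7, Oct.conj, Oct.x_mk, Oct.y_mk, Oct.coord_0, Oct.coord_1, Oct.coord_2,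
      Oct.coord_3, Oct.coord_4, Oct.coord_5, Oct.coord_6, Oct.coord_7]
  refine Oct.ext ?_ ?_ <;>
  · ext <;>
    · simp only [Oct.x_mul, Oct.y_mul, Oct.x_add, Oct.y_add, Oct.x_smul, Oct.y_smul,
          Oct.x_neg, Oct.y_neg, Oct.x_mk, Oct.y_mk,
          Quaternion.re_add, Quaternion.imI_add, Quaternion.imJ_add,
          Quaternion.imK_add, Quaternion.re_sub, Quaternion.imI_sub,
          Quaternion.imJ_sub, Quaternion.imK_sub, Quaternion.re_neg,
          Quaternion.imI_neg, Quaternion.imJ_neg, Quaternion.imK_neg,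
          Quaternion.re_smul, Quaternion.imI_smul, Quaternion.imJ_smul,
          Quaternion.imK_smul, Quaternion.re_mul, Quaternion.imI_mul,
          Quaternion.imJ_mul, Quaternion.imK_mul, Quaternion.re_star,
          Quaternion.imI_star, Quaternion.imJ_star, Quaternion.imK_star,
          Quaternion.re_one, Quaternion.imI_one, Quaternion.imJ_one,
          Quaternion.imK_one, Quaternion.re_zero, Quaternion.imI_zero,
          Quaternion.imJ_zero, Quaternion.imK_zero, smul_eq_mul,
          neg_zero, neg_neg, star_zero, star_one, star_neg]
      simp only [Oct.x, Oct.y, Oct.mk, QuaternionAlgebra.re_zero, QuaternionAlgebra.imI_zero,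
        QuaternionAlgebra.imJ_zero, QuaternionAlgebra.imK_zero, Quaternion.re_zero,
        Quaternion.imI_zero, Quaternion.imJ_zero, Quaternion.imK_zero]
      try ring_nf

set_option maxHeartbeats 1000000 in
lemma oct_key6 (p : Oct) :
    (Oct.e 6).conj * p = ∑ l : Fin 8, Oct.coord 6 (p * (Oct.e l).conj) • Oct.e l := by
  simp only [Fin.sum_univ_eight, Oct.e_0, Oct.e_1, Oct.e_2, Oct.e_3, Oct.e_4, Oct.e_5,
      Oct.e_6, Oct.e_7, Oct.conj, Oct.x_mk, Oct.y_mk, Oct.coord_0, Oct.coord_1, Oct.coord_2,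
      Oct.coord_3, Oct.coord_4, Oct.coord_5, Oct.coord_6, Oct.coord_7]
  refine Oct.ext ?_ ?_ <;>
  · ext <;>
    · simp only [Oct.x_mul, Oct.y_mul, Oct.x_add, Oct.y_add, Oct.x_smul, Oct.y_smul,
          Oct.x_neg, Oct.y_neg, Oct.x_mk, Oct.y_mk,
          Quaternion.re_add, Quaternion.imI_add, Quaternion.imJ_add,
          Quaternion.imK_add, Quaternion.re_sub, Quaternion.imI_sub,
          Quaternion.imJ_sub, Quaternion.imK_sub, Quaternion.re_neg,
          Quaternion.imI_neg, Quaternion.imJ_neg, Quaternion.imK_neg,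
          Quaternion.re_smul, Quaternion.imI_smul, Quaternion.imJ_smul,
          Quaternion.imK_smul, Quaternion.re_mul, Quaternion.imI_mul,
          Quaternion.imJ_mul, Quaternion.imK_mul, Quaternion.re_star,
          Quaternion.imI_star, Quaternion.imJ_star, Quaternion.imK_star,
          Quaternion.re_one, Quaternion.imI_one, Quaternion.imJ_one,
          Quaternion.imK_one, Quaternion.re_zero, Quaternion.imI_zero,
          Quaternion.imJ_zero, Quaternion.imK_zero, smul_eq_mul,
          neg_zero, neg_neg, star_zero, star_one, star_neg]
      simp only [Oct.x, Oct.y, Oct.mk, QuaternionAlgebra.re_zero, QuaternionAlgebra.imI_zero,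
        QuaternionAlgebra.imJ_zero, QuaternionAlgebra.imK_zero, Quaternion.re_zero,
        Quaternion.imI_zero, Quaternion.imJ_zero, Quaternion.imK_zero]
      try ring_nf

set_option maxHeartbeats 1000000 in
lemma oct_key7 (p : Oct) :
    (Oct.e 7).conj * p = ∑ l : Fin 8, Oct.coord 7 (p * (Oct.e l).conj) • Oct.e l := by
  simp only [Fin.sum_univ_eight, Oct.e_0, Oct.e_1, Oct.e_2, Oct.e_3, Oct.e_4, Oct.e_5,
      Oct.e_6, Oct.e_7, Oct.conj, Oct.x_mk, Oct.y_mk, Oct.coord_0, Oct.coord_1, Oct.coord_2,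
      Oct.coord_3, Oct.coord_4, Oct.coord_5, Oct.coord_6, Oct.coord_7]
  refine Oct.ext ?_ ?_ <;>
  · ext <;>
    · simp only [Oct.x_mul, Oct.y_mul, Oct.x_add, Oct.y_add, Oct.x_smul, Oct.y_smul,
          Oct.x_neg, Oct.y_neg, Oct.x_mk, Oct.y_mk,
          Quaternion.re_add, Quaternion.imI_add, Quaternion.imJ_add,
          Quaternion.imK_add, Quaternion.re_sub, Quaternion.imI_sub,
          Quaternion.imJ_sub, Quaternion.imK_sub, Quaternion.re_neg,
          Quaternion.imI_neg, Quaternion.imJ_neg, Quaternion.imK_neg,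
          Quaternion.re_smul, Quaternion.imI_smul, Quaternion.imJ_smul,
          Quaternion.imK_smul, Quaternion.re_mul, Quaternion.imI_mul,
          Quaternion.imJ_mul, Quaternion.imK_mul, Quaternion.re_star,
          Quaternion.imI_star, Quaternion.imJ_star, Quaternion.imK_star,
          Quaternion.re_one, Quaternion.imI_one, Quaternion.imJ_one,
          Quaternion.imK_one, Quaternion.re_zero, Quaternion.imI_zero,
          Quaternion.imJ_zero, Quaternion.imK_zero, smul_eq_mul,
          neg_zero, neg_neg, star_zero, star_one, star_neg]
      simp only [Oct.x, Oct.y, Oct.mk, QuaternionAlgebra.re_zero, QuaternionAlgebra.imI_zero,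
        QuaternionAlgebra.imJ_zero, QuaternionAlgebra.imK_zero, Quaternion.re_zero,
        Quaternion.imI_zero, Quaternion.imJ_zero, Quaternion.imK_zero]
      try ring_nf

lemma oct_key (i : Fin 8) (p : Oct) :
    (Oct.e i).conj * p = ∑ l : Fin 8, Oct.coord i (p * (Oct.e l).conj) • Oct.e l := by
  fin_cases i
  · exact oct_key0 p
  · exact oct_key1 p
  · exact oct_key2 p
  · exact oct_key3 p
  · exact oct_key4 p
  · exact oct_key5 p
  · exact oct_key6 p
  · exact oct_key7 p

/-- For every `X ∈ ℝ⁸`, `Ω·(Φ(X) ⊗ 1) = Σᵢ eᵢ ⊗ ι(Xᵢ)`, where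
`Xᵢ = Φ⁻¹(Φ(X)·conj(eᵢ))` are the twistor vectors. -/
theorem omega_mul_eq_sum_twistor (X : EuclideanSpace ℝ (Fin 8)) :
    Omega * (Phi X ⊗ₜ[ℝ] (1 : Cl8))
      = ∑ i : Fin 8, Oct.e i ⊗ₜ[ℝ] CliffordAlgebra.ι Q8 (Xtw X i) := by
  have hι : ∀ v : EuclideanSpace ℝ (Fin 8),
      CliffordAlgebra.ι Q8 v = ∑ i : Fin 8, v i • g i := by
    intro v
    have hv : v = ∑ i : Fin 8, v i • (EuclideanSpace.single i (1:ℝ)) := by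
      ext j
      rw [Fin.sum_univ_eight]
      fin_cases j <;>
        simp [EuclideanSpace.single_apply]
    conv_lhs => rw [hv]
    simp [g]
  have hcoord : ∀ (l : Fin 8) (i : Fin 8), Xtw X l i = Oct.coord i (Phi X * (Oct.e l).conj) :=
    fun l i => rfl
  rw [Omega, Finset.sum_mul]
  simp only [Algebra.TensorProduct.tmul_mul_tmul, mul_one]
  rw [show ∀ s : Fin 8 → Oct ⊗[ℝ] Cl8, (∑ i, s i) = ∑ i, s i from fun _ => rfl]
  rw [Finset.sum_congr rfl fun i _ => by
    rw [oct_key i (Phi X), TensorProduct.sum_tmul]]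
  rw [Finset.sum_comm]
  refine Finset.sum_congr rfl fun l _ => ?_
  rw [hι (Xtw X l), TensorProduct.tmul_sum]
  refine Finset.sum_congr rfl fun i _ => ?_
  rw [hcoord]
  exact TensorProduct.smul_tmul _ _ _
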